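/- If W is a purely polarized variety and V is any variety of the same type, then the Mal'tsev product V ∘ W is a variety: for any A ∈ V ∘ W and any congruence θ of A, the quotient A/θ also belongs to V ∘ W. Moreover, for A ∈ V ∘ W exactly one class of the W-replica congruence of A is a subalgebra of A, and all other classes are singletons. -/

import Mathlib

structure Alg (Ω : Type) (ar : Ω → ℕ) : Type 1 where
  carrier : Type
  interp : ∀ ω : Ω, (Fin (ar ω) → carrier) → carrier

inductive Term (Ω : Type) (ar : Ω → ℕ) (X : Type) : Type
  | var : X → Term Ω ar X
  | op : (ω : Ω) → (Fin (ar ω) → Term Ω ar X) → Term Ω ar X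

variable {Ω : Type} {ar : Ω → ℕ} {X Y : Type}

def Term.eval (A : Alg Ω ar) (v : X → A.carrier) : Term Ω ar X → A.carrier
  | .var x => v x
  | .op ω ts => A.interp ω fun i => (ts i).eval A v

def Term.subst (σ : X → Term Ω ar Y) : Term Ω ar X → Term Ω ar Y
  | .var x => σ x
  | .op ω ts => .op ω fun i => (ts i).subst σ

def Term.varSet : Term Ω ar X → Set X
  | .var x => {x}
  | .op _ ts => ⋃ i, (ts i).varSet

def Satisfies (A : Alg Ω ar) (p q : Term Ω ar X) : Prop :=
  ∀ v : X → A.carrier, p.eval A v = q.eval A v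

/-- `V ⊨ p = q` for a class of algebras `V`. -/
def VSat (V : Alg Ω ar → Prop) (p q : Term Ω ar X) : Prop :=
  ∀ A, V A → Satisfies A p q

/-- `p` is a term idempotent of `V`: `V ⊨ ω(p,…,p) = p` for every basic operation `ω`. -/
def TermIdem (V : Alg Ω ar → Prop) (p : Term Ω ar X) : Prop :=
  ∀ ω : Ω, VSat V (Term.op ω fun _ => p) p

/-- `V` is a term idempotent variety: both sides of every nontrivial identity it
satisfies are term idempotents of `V`. -/
def TermIdemVariety (V : Alg Ω ar → Prop) : Prop :=
  ∀ p q : Term Ω ar ℕ, VSat V p q → p ≠ q → TermIdem V p ∧ TermIdem V q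

def Models (A : Alg Ω ar) (E : Set (Term Ω ar ℕ × Term Ω ar ℕ)) : Prop :=
  ∀ e ∈ E, Satisfies A e.1 e.2

/-- The variety (equational class) defined by the set of identities `E`. -/
def VarietyOf (E : Set (Term Ω ar ℕ × Term Ω ar ℕ)) : Alg Ω ar → Prop :=
  fun A => Models A E

structure IsCongr (A : Alg Ω ar) (r : A.carrier → A.carrier → Prop) : Prop where
  refl : ∀ a, r a a
  symm : ∀ {a b}, r a b → r b a
  trans : ∀ {a b c}, r a b → r b c → r a c
  compat : ∀ (ω : Ω) (f g : Fin (ar ω) → A.carrier),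
    (∀ i, r (f i) (g i)) → r (A.interp ω f) (A.interp ω g)

/-- Quotient algebra of `A` by a (congruence) relation `r`. -/
noncomputable def Alg.quot (A : Alg Ω ar) (r : A.carrier → A.carrier → Prop) : Alg Ω ar where
  carrier := Quot r
  interp := fun ω f => Quot.mk r (A.interp ω fun i => (f i).out)

/-- `r` is the `W`-replica congruence of `A`: the smallest congruence whose quotient lies in `W`. -/
def IsReplica (W : Alg Ω ar → Prop) (A : Alg Ω ar) (r : A.carrier → A.carrier → Prop) : Prop :=
  IsCongr A r ∧ W (A.quot r) ∧
    ∀ s : A.carrier → A.carrier → Prop, IsCongr A s → W (A.quot s) →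
      ∀ a b, r a b → s a b

/-- The `r`-class of `a` is a subalgebra of `A`. -/
def ClassIsSub (A : Alg Ω ar) (r : A.carrier → A.carrier → Prop) (a : A.carrier) : Prop :=
  ∀ (ω : Ω) (f : Fin (ar ω) → A.carrier), (∀ i, r (f i) a) → r (A.interp ω f) a

/-- The `r`-class of `a` viewed as an algebra. -/
def classAlg (A : Alg Ω ar) (r : A.carrier → A.carrier → Prop) (a : A.carrier)
    (h : ClassIsSub A r a) : Alg Ω ar where
  carrier := {b : A.carrier // r b a}
  interp := fun ω f => ⟨A.interp ω fun i => (f i).1, h ω _ fun i => (f i).2⟩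

/-- The Mal'tsev product `V ∘ W`. -/
def MalProd (V W : Alg Ω ar → Prop) (A : Alg Ω ar) : Prop :=
  ∀ r : A.carrier → A.carrier → Prop, IsReplica W A r →
    ∀ (a : A.carrier) (h : ClassIsSub A r a), V (classAlg A r a h)

structure Hom (A B : Alg Ω ar) where
  toFun : A.carrier → B.carrier
  map : ∀ ω f, toFun (A.interp ω f) = B.interp ω fun i => toFun (f i)

def IsIdem (A : Alg Ω ar) (a : A.carrier) : Prop :=
  ∀ ω : Ω, A.interp ω (fun _ => a) = a

/-- `u` is a constant term of `V`: `V ⊨ u(x₁,…,xₙ) = u(y₁,…,yₙ)`. -/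
def ConstTerm {Ω : Type} {ar : Ω → ℕ} (V : Alg Ω ar → Prop) (u : Term Ω ar ℕ) : Prop :=
  VSat V (u.subst fun n => .var (2 * n)) (u.subst fun n => .var (2 * n + 1))

/-- A polar term of `V`: a constant unary term idempotent. -/
def IsPolar {Ω : Type} {ar : Ω → ℕ} (V : Alg Ω ar → Prop) (p : Term Ω ar ℕ) : Prop :=
  p.varSet ⊆ {0} ∧ ConstTerm V p ∧ TermIdem V p

/- ===================== auxiliary development ===================== -/

theorem eval_subst (A : Alg Ω ar) (σ : X → Term Ω ar Y) (v : Y → A.carrier) :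
    ∀ t : Term Ω ar X, (t.subst σ).eval A v = t.eval A fun x => (σ x).eval A v
  | .var x => rfl
  | .op ω ts => congrArg (A.interp ω) (funext fun i => eval_subst A σ v (ts i))

theorem congr_of_quot_eq {A : Alg Ω ar} {r : A.carrier → A.carrier → Prop}
    (hr : IsCongr A r) {x y : A.carrier} (h : Quot.mk r x = Quot.mk r y) : r x y := by
  have key : Quot.lift (r x)
      (fun a b hab => propext ⟨fun h' => hr.trans h' hab, fun h' => hr.trans h' (hr.symm hab)⟩)
      (Quot.mk r x) := hr.refl x
  rw [h] at key
  exact key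

theorem eval_quot {A : Alg Ω ar} {r : A.carrier → A.carrier → Prop}
    (hr : IsCongr A r) (v : X → A.carrier) :
    ∀ t : Term Ω ar X, t.eval (A.quot r) (fun x => Quot.mk r (v x)) = Quot.mk r (t.eval A v)
  | .var x => rfl
  | .op ω ts => by
    show (A.quot r).interp ω (fun i => (ts i).eval (A.quot r) (fun x => Quot.mk r (v x))) = _
    have h1 : (fun i => (ts i).eval (A.quot r) (fun x => Quot.mk r (v x)))
        = fun i => Quot.mk r ((ts i).eval A v) := funext fun i => eval_quot hr v (ts i)
    rw [h1]
    show Quot.mk r (A.interp ω fun i => (Quot.mk r ((ts i).eval A v)).out) = _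
    exact Quot.sound (hr.compat ω _ _ fun i => congr_of_quot_eq hr (Quot.out_eq _))

theorem eval_quot' {A : Alg Ω ar} {r : A.carrier → A.carrier → Prop}
    (hr : IsCongr A r) (u : X → Quot r) (t : Term Ω ar X) :
    t.eval (A.quot r) u = Quot.mk r (t.eval A fun x => (u x).out) := by
  have h : u = fun x => Quot.mk r ((u x).out) := funext fun x => (Quot.out_eq _).symm
  conv_lhs => rw [h]
  exact eval_quot hr _ t

theorem eval_class {A : Alg Ω ar} {r : A.carrier → A.carrier → Prop} {a : A.carrier}
    (h : ClassIsSub A r a) (v : X → (classAlg A r a h).carrier) :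
    ∀ t : Term Ω ar X, (t.eval (classAlg A r a h) v).1 = t.eval A fun x => (v x).1
  | .var x => rfl
  | .op ω ts => congrArg (A.interp ω) (funext fun i => eval_class h v (ts i))

def tdepth : Term Ω ar X → ℕ
  | .var _ => 0
  | .op _ ts => (Finset.univ.sup fun i => tdepth (ts i)) + 1

theorem ne_op_self (ω : Ω) (i0 : Fin (ar ω)) (t : Term Ω ar X) :
    t ≠ Term.op ω fun _ => t := by
  intro h
  have h1 : tdepth t < tdepth (Term.op ω fun _ => t : Term Ω ar X) := by
    show tdepth t < (Finset.univ.sup fun _ : Fin (ar ω) => tdepth t) + 1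
    exact Nat.lt_succ_of_le (Finset.le_sup (f := fun _ : Fin (ar ω) => tdepth t) (Finset.mem_univ i0))
  rw [← h] at h1
  exact Nat.lt_irrefl _ h1

theorem idem_absorb {A : Alg Ω ar} {c : A.carrier} (hc : IsIdem A c) :
    ∀ t : Term Ω ar X, t.eval A (fun _ => c) = c
  | .var _ => rfl
  | .op ω ts => by
    show A.interp ω (fun i => (ts i).eval A fun _ => c) = c
    have h : (fun i => (ts i).eval A fun _ => c) = fun _ => c :=
      funext fun i => idem_absorb hc (ts i)
    rw [h]
    exact hc ω

/-- term-idempotent values are idempotent elements -/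
theorem termIdem_value_idem (Ew : Set (Term Ω ar ℕ × Term Ω ar ℕ))
    {t : Term Ω ar ℕ} (ht : TermIdem (VarietyOf Ew) t) {B : Alg Ω ar}
    (hB : VarietyOf Ew B) (v : ℕ → B.carrier) : IsIdem B (t.eval B v) :=
  fun ω => ht ω B hB v

theorem q_const (Ew : Set (Term Ω ar ℕ × Term Ω ar ℕ))
    {q : Term Ω ar ℕ} (hq : ConstTerm (VarietyOf Ew) q)
    {B : Alg Ω ar} (hB : VarietyOf Ew B) (v w : ℕ → B.carrier) :
    q.eval B v = q.eval B w := by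
  have h := hq B hB (fun n => if n % 2 = 0 then v (n / 2) else w (n / 2))
  rw [eval_subst, eval_subst] at h
  have hv : (fun n => Term.eval B (fun n => if n % 2 = 0 then v (n / 2) else w (n / 2))
      ((fun n => (Term.var (2 * n) : Term Ω ar ℕ)) n)) = v := by
    funext n
    show (if (2 * n) % 2 = 0 then v ((2 * n) / 2) else w ((2 * n) / 2)) = v n
    have h1 : (2 * n) % 2 = 0 := by omega
    have h2 : (2 * n) / 2 = n := by omega
    rw [if_pos h1, h2]
  have hw : (fun n => Term.eval B (fun n => if n % 2 = 0 then v (n / 2) else w (n / 2))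
      ((fun n => (Term.var (2 * n + 1) : Term Ω ar ℕ)) n)) = w := by
    funext n
    show (if (2 * n + 1) % 2 = 0 then v ((2 * n + 1) / 2) else w ((2 * n + 1) / 2)) = w n
    have h1 : ¬ (2 * n + 1) % 2 = 0 := by omega
    have h2 : (2 * n + 1) / 2 = n := by omega
    rw [if_neg h1, h2]
  rw [hv, hw] at h
  exact h

theorem unique_idem (Ew : Set (Term Ω ar ℕ × Term Ω ar ℕ))
    {q : Term Ω ar ℕ} (hq : IsPolar (VarietyOf Ew) q) {B : Alg Ω ar}
    (hB : VarietyOf Ew B) {c d : B.carrier} (hc : IsIdem B c) (hd : IsIdem B d) : c = d := by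
  have h1 : q.eval B (fun _ => c) = c := idem_absorb hc q
  have h2 : q.eval B (fun _ => d) = d := idem_absorb hd q
  rw [← h1, ← h2]
  exact q_const Ew hq.2.1 hB _ _

/-- the set of values of term idempotents of `W` in `A` -/
def D0 (Ew : Set (Term Ω ar ℕ × Term Ω ar ℕ)) (A : Alg Ω ar) : Set A.carrier :=
  {x | ∃ t : Term Ω ar ℕ, ∃ v : ℕ → A.carrier, TermIdem (VarietyOf Ew) t ∧ x = t.eval A v}

/-- the replica congruence, explicitly -/
def rrep (Ew : Set (Term Ω ar ℕ × Term Ω ar ℕ)) (A : Alg Ω ar) :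
    A.carrier → A.carrier → Prop :=
  fun x y => x = y ∨ (x ∈ D0 Ew A ∧ y ∈ D0 Ew A)

/-- KEY: absorption — if one argument is a term-idempotent value, so is the result. -/
theorem D0_absorb {Ew : Set (Term Ω ar ℕ × Term Ω ar ℕ)}
    (hTI : TermIdemVariety (VarietyOf Ew)) {A : Alg Ω ar}
    (ω : Ω) (f : Fin (ar ω) → A.carrier) (i0 : Fin (ar ω)) (hf : f i0 ∈ D0 Ew A) :
    A.interp ω f ∈ D0 Ew A := by
  obtain ⟨t, v, ht, hval⟩ := hf
  set te : Term Ω ar ℕ := t.subst (fun m => .var (2 * m)) with hte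
  set u : Fin (ar ω) → Term Ω ar ℕ :=
    fun i => if i = i0 then te else .var (2 * i.val + 1) with hu
  set u' : Fin (ar ω) → Term Ω ar ℕ :=
    fun i => if i = i0 then .op ω (fun _ => te) else .var (2 * i.val + 1) with hu'
  have hTT : VSat (VarietyOf Ew) (.op ω u) (.op ω u') := by
    intro B hB w
    show B.interp ω (fun i => (u i).eval B w) = B.interp ω (fun i => (u' i).eval B w)
    refine congrArg _ (funext fun i => ?_)
    by_cases hi : i = i0
    · simp only [hu, hu', if_pos hi]
      show te.eval B w = B.interp ω fun _ => te.eval B w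
      have h1 : te.eval B w = t.eval B fun m => w (2 * m) := by
        rw [hte, eval_subst]; rfl
      rw [h1]
      exact (ht ω B hB (fun m => w (2 * m))).symm
    · simp only [hu, hu', if_neg hi]
  have hne : (Term.op ω u) ≠ Term.op ω u' := by
    intro h
    have h2 : u = u' := by
      have := (Term.op.injEq ω u ω u').mp h
      exact eq_of_heq this.2
    have h3 := congrFun h2 i0
    simp only [hu, hu', if_pos rfl] at h3
    exact ne_op_self ω i0 te h3
  have hTidem : TermIdem (VarietyOf Ew) (.op ω u) := (hTI _ _ hTT hne).1
  refine ⟨.op ω u,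
    (fun n => if n % 2 = 0 then v (n / 2)
      else if h : (n - 1) / 2 < ar ω then f ⟨(n - 1) / 2, h⟩ else f i0), hTidem, ?_⟩
  set V : ℕ → A.carrier := (fun n => if n % 2 = 0 then v (n / 2)
      else if h : (n - 1) / 2 < ar ω then f ⟨(n - 1) / 2, h⟩ else f i0) with hV
  show A.interp ω f = A.interp ω (fun i => (u i).eval A V)
  refine congrArg _ (funext fun i => ?_)
  by_cases hi : i = i0
  · subst hi
    simp only [hu, if_pos rfl]
    have h1 : te.eval A V = t.eval A fun m => V (2 * m) := by rw [hte, eval_subst]; rfl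
    have h2 : (fun m => V (2 * m)) = v := by
      funext m
      show (if (2 * m) % 2 = 0 then v ((2 * m) / 2) else _) = v m
      have e1 : (2 * m) % 2 = 0 := by omega
      have e2 : (2 * m) / 2 = m := by omega
      rw [if_pos e1, e2]
    rw [h1, h2, ← hval]
  · simp only [hu, if_neg hi]
    show f i = V (2 * i.val + 1)
    have e1 : ¬ (2 * i.val + 1) % 2 = 0 := by omega
    have e2 : (2 * i.val + 1 - 1) / 2 = i.val := by omega
    rw [hV]
    simp only [if_neg e1, e2, i.isLt, dif_pos]

theorem rrep_congr {Ew : Set (Term Ω ar ℕ × Term Ω ar ℕ)}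
    (hTI : TermIdemVariety (VarietyOf Ew)) (A : Alg Ω ar) : IsCongr A (rrep Ew A) where
  refl _ := Or.inl rfl
  symm h := h.elim (fun e => Or.inl e.symm) (fun h' => Or.inr ⟨h'.2, h'.1⟩)
  trans h1 h2 := by
    rcases h1 with rfl | ⟨ha, hb⟩
    · exact h2
    · rcases h2 with rfl | ⟨hb', hc⟩
      · exact Or.inr ⟨ha, hb⟩
      · exact Or.inr ⟨ha, hc⟩
  compat ω f g hfg := by
    by_cases h : ∀ i, f i = g i
    · exact Or.inl (congrArg _ (funext h))
    · push_neg at h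
      obtain ⟨i0, hi0⟩ := h
      rcases hfg i0 with he | ⟨h1, h2⟩
      · exact absurd he hi0
      · exact Or.inr ⟨D0_absorb hTI ω f i0 h1, D0_absorb hTI ω g i0 h2⟩

theorem rrep_quot_models {Ew : Set (Term Ω ar ℕ × Term Ω ar ℕ)}
    (hTI : TermIdemVariety (VarietyOf Ew)) (A : Alg Ω ar) :
    Models (A.quot (rrep Ew A)) Ew := by
  intro e he v
  by_cases hpq : e.1 = e.2
  · rw [hpq]
  · have hW : VSat (VarietyOf Ew) e.1 e.2 := fun B hB => hB e he
    obtain ⟨h1, h2⟩ := hTI e.1 e.2 hW hpq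
    have hc := rrep_congr hTI A
    rw [eval_quot' hc v e.1, eval_quot' hc v e.2]
    exact Quot.sound (Or.inr ⟨⟨e.1, _, h1, rfl⟩, ⟨e.2, _, h2, rfl⟩⟩)

theorem rrep_min {Ew : Set (Term Ω ar ℕ × Term Ω ar ℕ)}
    {q : Term Ω ar ℕ} (hq : IsPolar (VarietyOf Ew) q) {A : Alg Ω ar}
    {σ : A.carrier → A.carrier → Prop} (hσ : IsCongr A σ) (hM : Models (A.quot σ) Ew) :
    ∀ x y, rrep Ew A x y → σ x y := by
  rintro x y (rfl | ⟨⟨t, v, ht, rfl⟩, ⟨t', v', ht', rfl⟩⟩)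
  · exact hσ.refl x
  · apply congr_of_quot_eq hσ
    rw [← eval_quot hσ v t, ← eval_quot hσ v' t']
    exact unique_idem Ew hq hM
      (termIdem_value_idem Ew ht hM _) (termIdem_value_idem Ew ht' hM _)

theorem rrep_replica {Ew : Set (Term Ω ar ℕ × Term Ω ar ℕ)}
    {q : Term Ω ar ℕ} (hq : IsPolar (VarietyOf Ew) q)
    (hTI : TermIdemVariety (VarietyOf Ew)) (A : Alg Ω ar) :
    IsReplica (VarietyOf Ew) A (rrep Ew A) :=
  ⟨rrep_congr hTI A, rrep_quot_models hTI A,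
    fun _ hs hMs x y h => rrep_min hq hs hMs x y h⟩

theorem rep_iff {Ew : Set (Term Ω ar ℕ × Term Ω ar ℕ)}
    {q : Term Ω ar ℕ} (hq : IsPolar (VarietyOf Ew) q)
    (hTI : TermIdemVariety (VarietyOf Ew)) {A : Alg Ω ar}
    {r : A.carrier → A.carrier → Prop} (hr : IsReplica (VarietyOf Ew) A r) :
    ∀ x y, r x y ↔ rrep Ew A x y :=
  fun x y => ⟨fun h => hr.2.2 _ (rrep_congr hTI A) (rrep_quot_models hTI A) x y h,
    fun h => rrep_min hq hr.1 hr.2.1 x y h⟩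

theorem class_sub (hτ : ∀ ω : Ω, 0 < ar ω) {Ew : Set (Term Ω ar ℕ × Term Ω ar ℕ)}
    {q : Term Ω ar ℕ} (hq : IsPolar (VarietyOf Ew) q)
    (hTI : TermIdemVariety (VarietyOf Ew)) {A : Alg Ω ar}
    {r : A.carrier → A.carrier → Prop} (hr : IsReplica (VarietyOf Ew) A r)
    {a : A.carrier} (ha : a ∈ D0 Ew A) : ClassIsSub A r a := by
  intro ω f hf
  have hi0 : f ⟨0, hτ ω⟩ ∈ D0 Ew A := by
    rcases (rep_iff hq hTI hr _ _).mp (hf ⟨0, hτ ω⟩) with he | ⟨h1, _⟩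
    · rw [he]; exact ha
    · exact h1
  exact (rep_iff hq hTI hr _ _).mpr (Or.inr ⟨D0_absorb hTI ω f ⟨0, hτ ω⟩ hi0, ha⟩)

theorem sub_unique {Ew : Set (Term Ω ar ℕ × Term Ω ar ℕ)}
    {q : Term Ω ar ℕ} (hq : IsPolar (VarietyOf Ew) q) {A : Alg Ω ar}
    {r : A.carrier → A.carrier → Prop} (hr : IsReplica (VarietyOf Ew) A r)
    (a0 : A.carrier) {b : A.carrier} (hb : ClassIsSub A r b) :
    r b (q.eval A fun _ => a0) := by
  have hc := hr.1
  have hW : Models (A.quot r) Ew := hr.2.1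
  have hidb : IsIdem (A.quot r) (Quot.mk r b) := by
    intro ω
    show Quot.mk r (A.interp ω fun _ => (Quot.mk r b).out) = Quot.mk r b
    exact Quot.sound (hb ω _ fun _ => congr_of_quot_eq hc (Quot.out_eq _))
  have hida : IsIdem (A.quot r) (Quot.mk r (q.eval A fun _ => a0)) := by
    rw [← eval_quot hc]
    exact termIdem_value_idem Ew hq.2.2 hW _
  exact congr_of_quot_eq hc (unique_idem Ew hq hW hidb hida)

/-- if `W` is purely polarized, then `V ∘ W` is closed under quotients
(hence a variety); moreover for nonempty `A ∈ V ∘ W` exactly one class of the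
`W`-replica congruence is a subalgebra, and all other classes are singletons. -/
theorem stmt_19 {Ω : Type} {ar : Ω → ℕ} (hτ : ∀ ω, 0 < ar ω)
    (Ev Ew : Set (Term Ω ar ℕ × Term Ω ar ℕ))
    (hpp : (∃ q : Term Ω ar ℕ, IsPolar (VarietyOf Ew) q) ∧
      TermIdemVariety (VarietyOf Ew)) :
    (∀ A : Alg Ω ar, MalProd (VarietyOf Ev) (VarietyOf Ew) A →
      ∀ r : A.carrier → A.carrier → Prop, IsCongr A r →
        MalProd (VarietyOf Ev) (VarietyOf Ew) (A.quot r)) ∧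
    (∀ A : Alg Ω ar, Nonempty A.carrier → MalProd (VarietyOf Ev) (VarietyOf Ew) A →
      ∀ r : A.carrier → A.carrier → Prop, IsReplica (VarietyOf Ew) A r →
        ∃ a : A.carrier, ClassIsSub A r a ∧
          (∀ b : A.carrier, ClassIsSub A r b → r b a) ∧
          (∀ b : A.carrier, ¬ r b a → ∀ c : A.carrier, r b c → c = b)) := by
  obtain ⟨⟨q, hq⟩, hTI⟩ := hpp
  constructor
  · -- closure under quotients
    intro A hA r hrc ϱ' hϱ' a' h'
    intro e he v
    apply Subtype.ext
    rw [eval_class h' v e.1, eval_class h' v e.2]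
    have haA : (q.eval A fun _ => a'.out) ∈ D0 Ew A := ⟨q, _, hq.2.2, rfl⟩
    have hsubA : ClassIsSub A (rrep Ew A) (q.eval A fun _ => a'.out) :=
      class_sub hτ hq hTI (rrep_replica hq hTI A) haA
    have hV := hA (rrep Ew A) (rrep_replica hq hTI A) _ hsubA
    have key : ∀ w : ℕ → A.carrier, (∀ n, w n ∈ D0 Ew A) →
        e.1.eval A w = e.2.eval A w := by
      intro w hw
      have hv : ∀ n, rrep Ew A (w n) (q.eval A fun _ => a'.out) :=
        fun n => Or.inr ⟨hw n, haA⟩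
      have h1 := hV e he (fun n => ⟨w n, hv n⟩)
      have h2 := congrArg Subtype.val h1
      have h2 := (eval_class hsubA _ e.1).symm.trans (h2.trans (eval_class hsubA _ e.2))
      exact h2
    have ha' : ϱ' a' (q.eval (A.quot r) fun _ => a') := sub_unique hq hϱ' a' h'
    have haQ : (q.eval (A.quot r) fun _ => a') ∈ D0 Ew (A.quot r) := ⟨q, _, hq.2.2, rfl⟩
    have hD : ∀ n, (v n).1 ∈ D0 Ew (A.quot r) := by
      intro n
      have h3 : ϱ' (v n).1 (q.eval (A.quot r) fun _ => a') := hϱ'.1.trans (v n).2 ha'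
      rcases (rep_iff hq hTI hϱ' _ _).mp h3 with he' | ⟨h4, _⟩
      · rw [he']; exact haQ
      · exact h4
    choose t tv hti hval using hD
    have hmk : ∀ n, (v n).1 = Quot.mk r ((t n).eval A fun m => (tv n m).out) := by
      intro n
      rw [hval n]
      exact eval_quot' hrc (tv n) (t n)
    have hvv : (fun n => (v n).1) = fun n => Quot.mk r ((t n).eval A fun m => (tv n m).out) :=
      funext hmk
    rw [hvv, eval_quot hrc _ e.1, eval_quot hrc _ e.2]
    exact congrArg _ (key _ fun n => ⟨t n, _, hti n, rfl⟩)
  · -- structure of the replica congruence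
    intro A hne hA r hr
    have a0 : A.carrier := Classical.choice hne
    have haA : (q.eval A fun _ => a0) ∈ D0 Ew A := ⟨q, _, hq.2.2, rfl⟩
    refine ⟨q.eval A fun _ => a0, class_sub hτ hq hTI hr haA,
      fun b hb => sub_unique hq hr a0 hb, ?_⟩
    intro b hba c hbc
    rcases (rep_iff hq hTI hr _ _).mp hbc with he | ⟨h1, _⟩
    · exact he.symm
    · exact absurd ((rep_iff hq hTI hr _ _).mpr (Or.inr ⟨h1, haA⟩)) hba
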